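/- arXiv:1811.10566 — 4 statements merged into one kernel-verified Lean document; each statement's English description precedes it below -/
import Mathlib

section
/- Let x_{j-1} < x_j < x_{j+1} < x_{j+2} with spacings h_j, h_{j+1}, h_{j+2}, and let D_j = f[x_{j-1},x_j,x_{j+1}], D_{j+1} = f[x_j,x_{j+1},x_{j+2}] be the second order divided differences of data f. Then the coefficient a_2 of (x − x_{j+1/2})² in the cubic Lagrange interpolating polynomial written in powers of (x − x_{j+1/2}), where x_{j+1/2} = (x_j + x_{j+1})/2, equals the weighted arithmetic mean w_j·D_j + w_{j+1}·D_{j+1} with w_j = (h_{j+1} + 2h_{j+2})/(2(h_j + h_{j+1} + h_{j+2})) and w_{j+1} = 1 − w_j. -/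
/-!
The second divided difference of a cubic `a₀ + a₁ t + a₂ t² + a₃ t³`, `t = x - c`, at three
nodes is `a₂ + a₃ (t_u + t_v + t_w)`. Centred at the midpoint `x_{j+1/2}` we have
`t_j + t_{j+1} = 0`, so `D_j = a₂ + a₃ t_{j-1}` and `D_{j+1} = a₂ + a₃ t_{j+2}`, and the weights
are exactly the ones that make `w_j t_{j-1} + w_{j+1} t_{j+2}` vanish, leaving `a₂`.
-/

section DividedDifference

variable {𝕜 : Type*} [Field 𝕜]

def cubicAround (c a0 a1 a2 a3 : 𝕜) (x : 𝕜) : 𝕜 :=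
  a0 + a1 * (x - c) + a2 * (x - c) ^ 2 + a3 * (x - c) ^ 3

def secondDivDiff (f : 𝕜 → 𝕜) (u v w : 𝕜) : 𝕜 :=
  (slope f v w - slope f u v) / (w - u)

theorem slope_cubicAround (c a0 a1 a2 a3 : 𝕜) {u v : 𝕜} (huv : u ≠ v) :
    slope (cubicAround c a0 a1 a2 a3) u v =
      a1 + a2 * ((u - c) + (v - c)) +
        a3 * ((u - c) ^ 2 + (u - c) * (v - c) + (v - c) ^ 2) := by
  have : v - u ≠ 0 := sub_ne_zero.mpr huv.symm
  rw [slope_def_field, cubicAround, cubicAround]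
  field_simp
  ring

theorem secondDivDiff_cubicAround (c a0 a1 a2 a3 : 𝕜) {u v w : 𝕜}
    (huv : u ≠ v) (hvw : v ≠ w) (huw : u ≠ w) :
    secondDivDiff (cubicAround c a0 a1 a2 a3) u v w =
      a2 + a3 * ((u - c) + (v - c) + (w - c)) := by
  have : w - u ≠ 0 := sub_ne_zero.mpr huw.symm
  rw [secondDivDiff, slope_cubicAround c a0 a1 a2 a3 hvw, slope_cubicAround c a0 a1 a2 a3 huv]
  field_simp
  ring

end DividedDifference

/-- The coefficient `a₂` of `(x - x_{j+1/2})²` in the cubic Lagrange interpolating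
polynomial on four consecutive non-uniform grid points equals the weighted arithmetic
mean of the two second-order divided differences. -/
theorem lagrange_cubic_a2_eq_weighted_mean
    (x0 x1 x2 x3 f0 f1 f2 f3 a0 a1 a2 a3 : ℝ)
    (h01 : x0 < x1) (h12 : x1 < x2) (h23 : x2 < x3)
    (hj : ℝ) (hj1 : ℝ) (hj2 : ℝ)
    (hhj : hj = x1 - x0) (hhj1 : hj1 = x2 - x1) (hhj2 : hj2 = x3 - x2)
    (xm : ℝ) (hxm : xm = (x1 + x2) / 2)
    (hint0 : a0 + a1 * (x0 - xm) + a2 * (x0 - xm) ^ 2 + a3 * (x0 - xm) ^ 3 = f0)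
    (hint1 : a0 + a1 * (x1 - xm) + a2 * (x1 - xm) ^ 2 + a3 * (x1 - xm) ^ 3 = f1)
    (hint2 : a0 + a1 * (x2 - xm) + a2 * (x2 - xm) ^ 2 + a3 * (x2 - xm) ^ 3 = f2)
    (hint3 : a0 + a1 * (x3 - xm) + a2 * (x3 - xm) ^ 2 + a3 * (x3 - xm) ^ 3 = f3)
    (Dj Dj1 wj wj1 : ℝ)
    (hDj : Dj = ((f2 - f1) / (x2 - x1) - (f1 - f0) / (x1 - x0)) / (x2 - x0))
    (hDj1 : Dj1 = ((f3 - f2) / (x3 - x2) - (f2 - f1) / (x2 - x1)) / (x3 - x1))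
    (hwj : wj = (hj1 + 2 * hj2) / (2 * (hj + hj1 + hj2)))
    (hwj1 : wj1 = 1 - wj) :
    a2 = wj * Dj + wj1 * Dj1 := by
  set p := cubicAround xm a0 a1 a2 a3
  have hDj_eq : Dj = secondDivDiff p x0 x1 x2 := by
    simp only [hDj, secondDivDiff, slope_def_field, p, cubicAround, hint0, hint1, hint2]
  have hDj1_eq : Dj1 = secondDivDiff p x1 x2 x3 := by
    simp only [hDj1, secondDivDiff, slope_def_field, p, cubicAround, hint1, hint2, hint3]
  rw [secondDivDiff_cubicAround xm a0 a1 a2 a3 h01.ne h12.ne (h01.trans h12).ne] at hDj_eq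
  rw [secondDivDiff_cubicAround xm a0 a1 a2 a3 h12.ne h23.ne (h12.trans h23).ne] at hDj1_eq
  have hmid : (x1 - xm) + (x2 - xm) = 0 := by
    rw [hxm]
    ring
  have hweights : wj * (x0 - xm) + (1 - wj) * (x3 - xm) = 0 := by
    have : hj + hj1 + hj2 ≠ 0 := by linarith
    rw [hwj]
    field_simp
    subst hhj hhj1 hhj2 hxm
    ring
  rw [hDj_eq, hDj1_eq, hwj1]
  linear_combination (-a3) * hweights - a3 * hmid
end

section
/- Let 0 < D_j and D_{j+1} > 0 with D_j ≤ D_{j+1} (strictly, D_j < D_{j+1}), and let the PPH cubic polynomial satisfy PPH''(x) = 2·V_j − (12/(2h_j + h_{j+1}))·(D_j − V_j)·(x − x_{j+1/2}). Then PPH''(x) > 0 if and only if x > x_{j+1/2} − ((h_j + h_{j+1} + h_{j+2})/3)·D_{j+1}/(D_{j+1} − D_j). -/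
/-!
`PPH''` is affine in `x` with slope `12 / (2 hⱼ + hⱼ₊₁) · (Vⱼ − Dⱼ)`, which is positive because a
weighted harmonic mean of `Dⱼ < Dⱼ₊₁` lies strictly above `Dⱼ`. So `PPH''` is positive exactly to the
right of its root `x_{j+1/2} − 2 Vⱼ / slope`, and the identity
`Vⱼ / (Vⱼ − Dⱼ) = Dⱼ₊₁ / ((1 − wⱼ)(Dⱼ₊₁ − Dⱼ))` with `1 − wⱼ = (2 hⱼ + hⱼ₊₁) / (2 (hⱼ + hⱼ₊₁ + hⱼ₊₂))`
turns that root into the stated threshold.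
-/

/-- `1 / weightedHarmonicMean w a b = w / a + (1 - w) / b`;
the paper's `Vⱼ` is `weightedHarmonicMean wⱼ Dⱼ Dⱼ₊₁`. -/
noncomputable def weightedHarmonicMean (w a b : ℝ) : ℝ := a * b / (w * b + (1 - w) * a)

section weightedHarmonicMean

variable {w a b : ℝ}

theorem weightedHarmonicMean_sub_left (hden : w * b + (1 - w) * a ≠ 0) :
    weightedHarmonicMean w a b - a = (1 - w) * a * (b - a) / (w * b + (1 - w) * a) := by
  unfold weightedHarmonicMean
  rw [eq_div_iff hden, sub_mul, div_mul_cancel₀ _ hden]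
  ring

theorem left_lt_weightedHarmonicMean (ha : 0 < a) (hab : a < b) (hw₀ : 0 ≤ w) (hw₁ : w < 1) :
    a < weightedHarmonicMean w a b := by
  have hden : 0 < w * b + (1 - w) * a := by nlinarith
  rw [← sub_pos, weightedHarmonicMean_sub_left hden.ne']
  have : 0 < 1 - w := by linarith
  have : 0 < b - a := by linarith
  positivity

theorem weightedHarmonicMean_div_sub_left (ha : a ≠ 0) (hab : a ≠ b) (hw : w ≠ 1)
    (hden : w * b + (1 - w) * a ≠ 0) :
    weightedHarmonicMean w a b / (weightedHarmonicMean w a b - a) = b / ((1 - w) * (b - a)) := by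
  have : 1 - w ≠ 0 := sub_ne_zero.mpr hw.symm
  have : b - a ≠ 0 := sub_ne_zero.mpr hab.symm
  rw [weightedHarmonicMean_sub_left hden]
  unfold weightedHarmonicMean
  field_simp
  exact mul_div_cancel_right₀ b (by contrapose! hden; linarith)

end weightedHarmonicMean

theorem add_mul_sub_pos_iff {a s m x : ℝ} (hs : 0 < s) : a + s * (x - m) > 0 ↔ x > m - a / s := by
  rw [gt_iff_lt, gt_iff_lt, sub_lt_comm, lt_div_iff₀ hs]
  constructor <;> intro h <;> linarith

/-- Convexity region of the PPH cubic in the case `0 < Dj < Dj1`. -/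
theorem pph_second_derivative_pos_iff
    (hj hj1 hj2 Dj Dj1 xm Vj : ℝ)
    (h1 : 0 < hj) (h2 : 0 < hj1) (h3 : 0 < hj2)
    (hDj : 0 < Dj) (hlt : Dj < Dj1)
    (wj wj1 : ℝ)
    (hwj : wj = (hj1 + 2 * hj2) / (2 * (hj + hj1 + hj2)))
    (hwj1 : wj1 = 1 - wj)
    (hVj : Vj = Dj * Dj1 / (wj * Dj1 + wj1 * Dj)) :
    ∀ x : ℝ,
      2 * Vj - (12 / (2 * hj + hj1)) * (Dj - Vj) * (x - xm) > 0 ↔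
        x > xm - ((hj + hj1 + hj2) / 3) * (Dj1 / (Dj1 - Dj)) := by
  intro x
  subst hwj1
  have hV : Vj = weightedHarmonicMean wj Dj Dj1 := hVj
  have hw₀ : 0 ≤ wj := by rw [hwj]; positivity
  have hcompl : 1 - wj = (2 * hj + hj1) / (2 * (hj + hj1 + hj2)) := by
    rw [hwj]; field_simp; ring
  have hw₁ : wj < 1 := by
    have : 0 < (2 * hj + hj1) / (2 * (hj + hj1 + hj2)) := by positivity
    linarith
  have hden : wj * Dj1 + (1 - wj) * Dj ≠ 0 := by nlinarith
  have hVD : Dj < Vj := hV ▸ left_lt_weightedHarmonicMean hDj hlt hw₀ hw₁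
  have hslope : 0 < 12 / (2 * hj + hj1) * (Vj - Dj) := by
    have : 0 < 2 * hj + hj1 := by linarith
    have : 0 < Vj - Dj := sub_pos.mpr hVD
    positivity
  have hroot : 2 * Vj / (12 / (2 * hj + hj1) * (Vj - Dj)) =
      (hj + hj1 + hj2) / 3 * (Dj1 / (Dj1 - Dj)) := by
    have hratio := hV ▸ weightedHarmonicMean_div_sub_left hDj.ne' hlt.ne hw₁.ne hden
    rw [hcompl] at hratio
    have : 0 < hj + hj1 + hj2 := by linarith
    have : Vj - Dj ≠ 0 := (sub_pos.mpr hVD).ne'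
    have : Dj1 - Dj ≠ 0 := (sub_pos.mpr hlt).ne'
    field_simp at hratio ⊢
    linear_combination 6 * hratio
  rw [← hroot, ← add_mul_sub_pos_iff hslope]
  ring_nf
end

section
/- Let X_PPH = x_{j+1/2} − ((h_j+h_{j+1}+h_{j+2})/3)·D_{j+1}/(D_{j+1}−D_j) be the inflection abscissa threshold of the PPH polynomial and X_PL = x_{j+1/2} − (2h_j+h_{j+1})/6 − ((h_j+h_{j+1}+h_{j+2})/3)·D_j/(D_{j+1}−D_j) that of the cubic Lagrange polynomial (case 0 < D_j < D_{j+1}). Then X_PL − X_PPH = (h_{j+1} + 2h_{j+2})/6 > 0, i.e. the PPH reconstruction is convex on a strictly larger half-line. -/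
theorem pph_convex_on_larger_halfline_general (hj hj1 hj2 Dj Dj1 xm : ℝ)
    (h2 : 0 < hj1) (h3 : 0 < hj2)
    (hlt : Dj < Dj1) :
    (xm - (2 * hj + hj1) / 6 - ((hj + hj1 + hj2) / 3) * (Dj / (Dj1 - Dj)))
      - (xm - ((hj + hj1 + hj2) / 3) * (Dj1 / (Dj1 - Dj)))
      = (hj1 + 2 * hj2) / 6 ∧ (hj1 + 2 * hj2) / 6 > 0 := by
  have hquot : Dj1 / (Dj1 - Dj) - Dj / (Dj1 - Dj) = 1 := by
    rw [← sub_div, div_self (sub_ne_zero.mpr hlt.ne')]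
  exact ⟨by linear_combination (hj + hj1 + hj2) / 3 * hquot, by positivity⟩

theorem pph_convex_on_larger_halfline (hj hj1 hj2 Dj Dj1 xm : ℝ)
    (h1 : 0 < hj) (h2 : 0 < hj1) (h3 : 0 < hj2)
    (hDj : 0 < Dj) (hlt : Dj < Dj1) :
    (xm - (2 * hj + hj1) / 6 - ((hj + hj1 + hj2) / 3) * (Dj / (Dj1 - Dj)))
      - (xm - ((hj + hj1 + hj2) / 3) * (Dj1 / (Dj1 - Dj)))
      = (hj1 + 2 * hj2) / 6 ∧ (hj1 + 2 * hj2) / 6 > 0 :=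
  pph_convex_on_larger_halfline_general hj hj1 hj2 Dj Dj1 xm h2 h3 hlt
end

section
/- In the case |D_j| > |D_{j+1}| with 0 < D_{j+1} < D_j, the thresholds X_PPH = x_{j+1/2} + ((h_j+h_{j+1}+h_{j+2})/3)·D_j/(D_j − D_{j+1}) and X_PL = x_{j+1/2} + (h_{j+1}+2h_{j+2})/6 + ((h_j+h_{j+1}+h_{j+2})/3)·D_{j+1}/(D_j − D_{j+1}) below which the PPH and Lagrange cubics are convex satisfy X_PPH − X_PL = (2h_j + h_{j+1})/6 > 0. -/
theorem pph_convex_on_larger_halfline_case2_general (hj hj1 hj2 Dj Dj1 xm : ℝ)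
    (h1 : 0 < hj) (h2 : 0 < hj1)
    (hlt : Dj1 < Dj) :
    (xm + ((hj + hj1 + hj2) / 3) * (Dj / (Dj - Dj1)))
      - (xm + (hj1 + 2 * hj2) / 6 + ((hj + hj1 + hj2) / 3) * (Dj1 / (Dj - Dj1)))
      = (2 * hj + hj1) / 6 ∧ (2 * hj + hj1) / 6 > 0 := by
  have hd : Dj - Dj1 ≠ 0 := (sub_pos.2 hlt).ne'
  refine ⟨?_, by positivity⟩
  field_simp
  ring

theorem pph_convex_on_larger_halfline_case2 (hj hj1 hj2 Dj Dj1 xm : ℝ)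
    (h1 : 0 < hj) (h2 : 0 < hj1) (h3 : 0 < hj2)
    (hDj1 : 0 < Dj1) (hlt : Dj1 < Dj) :
    (xm + ((hj + hj1 + hj2) / 3) * (Dj / (Dj - Dj1)))
      - (xm + (hj1 + 2 * hj2) / 6 + ((hj + hj1 + hj2) / 3) * (Dj1 / (Dj - Dj1)))
      = (2 * hj + hj1) / 6 ∧ (2 * hj + hj1) / 6 > 0 :=
  pph_convex_on_larger_halfline_case2_general hj hj1 hj2 Dj Dj1 xm h1 h2 hlt
end
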